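/- For every positive integer n and every positive integer k ≤ n, (n choose 0,k)_q = [n choose k]_q, where (n choose p,k)_q = ([n]_q/[k]_q) · Σ_{r≥0} [p choose r]_q [n-p choose r]_q [n-r-1 choose k-r-1]_q q^{(n-p)p + r(r-k)}. -/
import Mathlib


open Finset

/-- The variable `q`, as a rational function over `ℚ`. -/
noncomputable def q : RatFunc ℚ := RatFunc.X

/-- The q-integer `[m]_q = (1 - q^m)/(1 - q)`. -/
noncomputable def qint (m : ℕ) : RatFunc ℚ := (1 - q ^ m) / (1 - q)

/-- The q-integer for an integer exponent, `[x; q] = (q^x - 1)/(q - 1)`. -/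
noncomputable def qintZ (x : ℤ) : RatFunc ℚ := (q ^ x - 1) / (q - 1)

/-- The q-factorial `[m]!_q`. -/
noncomputable def qfac (m : ℕ) : RatFunc ℚ := ∏ i ∈ Finset.range m, qint (i + 1)

/-- The Gaussian q-binomial coefficient `[a choose b]_q`, zero when `b < 0` or `b > a`. -/
noncomputable def qbin (a b : ℤ) : RatFunc ℚ :=
  if 0 ≤ b ∧ b ≤ a then qfac a.toNat / (qfac b.toNat * qfac (a - b).toNat) else 0

/-- The first generalized q-binomial coefficient `(n choose p, k)_q`:
`([n]_q/[k]_q) · Σ_{r≥0} [p choose r]_q [n-p choose r]_q [n-r-1 choose k-r-1]_q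
  q^{(n-p)p + r(r-k)}`. -/
noncomputable def gchoose (n p k : ℕ) : RatFunc ℚ :=
  (qint n / qint k) *
    ∑ r ∈ Finset.range (n + 1),
      qbin p r * qbin ((n : ℤ) - p) r * qbin ((n : ℤ) - r - 1) ((k : ℤ) - r - 1) *
        q ^ (((n : ℤ) - p) * p + (r : ℤ) * ((r : ℤ) - k))

lemma one_sub_q_pow_ne_zero (m : ℕ) (hm : 0 < m) : (1 : RatFunc ℚ) - q ^ m ≠ 0 := by
  have h : (1 : RatFunc ℚ) - q ^ m =
      algebraMap (Polynomial ℚ) (RatFunc ℚ) (1 - Polynomial.X ^ m) := by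
    rw [map_sub, map_pow, map_one, RatFunc.algebraMap_X, q]
  rw [h]
  apply RatFunc.algebraMap_ne_zero
  intro hcon
  have := congrArg (fun p => Polynomial.coeff p m) hcon
  simp [Polynomial.coeff_one, Polynomial.coeff_X_pow, hm.ne'] at this

lemma qint_ne_zero (m : ℕ) (hm : 0 < m) : qint m ≠ 0 := by
  unfold qint
  exact div_ne_zero (one_sub_q_pow_ne_zero m hm) (by simpa using one_sub_q_pow_ne_zero 1 one_pos)

lemma qfac_ne_zero (m : ℕ) : qfac m ≠ 0 := by
  unfold qfac
  exact Finset.prod_ne_zero_iff.mpr fun i _ => qint_ne_zero _ (Nat.succ_pos i)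

lemma qfac_succ (m : ℕ) : qfac (m + 1) = qfac m * qint (m + 1) := by
  unfold qfac; rw [Finset.prod_range_succ]

theorem gchoose_p_eq_zero (n k : ℕ) (hn : 0 < n) (hk : 0 < k) (hkn : k ≤ n) :
    gchoose n 0 k = qbin n k := by
  unfold gchoose
  rw [Finset.sum_eq_single_of_mem 0 (Finset.mem_range.mpr (Nat.succ_pos n))]
  · have h00 : qbin 0 0 = 1 := by simp [qbin, qfac]
    have hn0 : qbin ((n:ℤ)) 0 = 1 := by
      rw [qbin, if_pos ⟨le_refl 0, Int.natCast_nonneg n⟩]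
      simp only [Int.toNat_zero, Int.sub_zero, Int.toNat_natCast]
      rw [show qfac 0 = 1 by simp [qfac], one_mul, div_self (qfac_ne_zero n)]
    simp only [Nat.cast_zero, sub_zero, mul_zero, zero_mul, add_zero, zpow_zero, mul_one,
      h00, hn0, one_mul]
    have e1 : ((n:ℤ)-1).toNat = n - 1 := by omega
    have e2 : ((k:ℤ)-1).toNat = k - 1 := by omega
    have e3 : ((n:ℤ)-1-((k:ℤ)-1)).toNat = n - k := by omega
    have e4 : ((n:ℤ)-(k:ℤ)).toNat = n - k := by omega
    have e5 : ((n:ℤ)).toNat = n := Int.toNat_natCast n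
    have e6 : ((k:ℤ)).toNat = k := Int.toNat_natCast k
    rw [qbin, qbin, if_pos ⟨by omega, by omega⟩, if_pos ⟨by omega, by omega⟩,
      e1, e2, e3, e4, e5, e6]
    have hfn : qfac n = qfac (n-1) * qint n := by
      conv_lhs => rw [show n = (n-1)+1 by omega]
      rw [qfac_succ, show n-1+1 = n by omega]
    have hfk : qfac k = qfac (k-1) * qint k := by
      conv_lhs => rw [show k = (k-1)+1 by omega]
      rw [qfac_succ, show k-1+1 = k by omega]
    rw [hfn, hfk]
    field_simp
  · intro r hr hr0
    have : qbin 0 r = 0 := by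
      rw [qbin, if_neg]
      rintro ⟨h1, h2⟩
      exact hr0 (by omega)
    simp [this]
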